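/- arXiv:2408.09871 — 2 statements merged into one kernel-verified Lean document; each statement's English description precedes it below -/
import Mathlib

section
/- Let n1, n2 ≥ 3 be natural numbers, m1 ≥ n1 - 1, m2 ≥ n2 - 1, and let k ∈ {4, 6, 10}. Then m1/n1 + m2/n2 > (m1 + m2 + k + 2)/(n1 + n2 + k). -/
/-! Writing `a = m₁/n₁` and `b = m₂/n₂`, the right-hand side is the average of `a`, `b` and
`(k+2)/k` with weights `n₁`, `n₂`, `k`. After clearing denominators the claim becomes
`k + 2 < a n₂ + b n₁ + (a + b) k`, which holds for every `k ≥ 0` because `a, b ≥ 2/3` and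
`n₁, n₂ ≥ 3`. -/

lemma two_thirds_le_div {m n : ℕ} (hn : 3 ≤ n) (hm : n - 1 ≤ m) : (2 / 3 : ℝ) ≤ m / n := by
  have hmn : (n : ℝ) ≤ m + 1 := by exact_mod_cast (show n ≤ m + 1 by omega)
  have hn' : (3 : ℝ) ≤ n := by exact_mod_cast hn
  rw [le_div_iff₀ (by positivity)]
  linarith

lemma add_div_lt_add {a b x y k : ℝ} (hx : 0 < x) (hy : 0 < y) (hk : 0 ≤ k)
    (hab : 1 ≤ a + b) (h : 2 < a * y + b * x) :
    (a * x + b * y + k + 2) / (x + y + k) < a + b := by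
  rw [div_lt_iff₀ (by positivity)]
  nlinarith [mul_nonneg (sub_nonneg.2 hab) hk]

theorem cnc_subadditive_par_choice_loop_general (n1 n2 m1 m2 k : ℕ)
    (hn1 : 3 ≤ n1) (hn2 : 3 ≤ n2)
    (hm1 : n1 - 1 ≤ m1) (hm2 : n2 - 1 ≤ m2) :
    (m1 : ℝ) / n1 + (m2 : ℝ) / n2 >
      ((m1 : ℝ) + m2 + k + 2) / ((n1 : ℝ) + n2 + k) := by
  have ha := two_thirds_le_div hn1 hm1
  have hb := two_thirds_le_div hn2 hm2
  have hx : (3 : ℝ) ≤ n1 := by exact_mod_cast hn1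
  have hy : (3 : ℝ) ≤ n2 := by exact_mod_cast hn2
  have key := add_div_lt_add (k := k) (by positivity) (by positivity) (by positivity)
    (by linarith) (by nlinarith : 2 < (m1 : ℝ) / n1 * n2 + (m2 : ℝ) / n2 * n1)
  rwa [div_mul_cancel₀ _ (by positivity), div_mul_cancel₀ _ (by positivity)] at key

theorem cnc_subadditive_par_choice_loop (n1 n2 m1 m2 k : ℕ)
    (hn1 : 3 ≤ n1) (hn2 : 3 ≤ n2)
    (hm1 : n1 - 1 ≤ m1) (hm2 : n2 - 1 ≤ m2)
    (hk : k ∈ ({4, 6, 10} : Set ℕ)) :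
    (m1 : ℝ) / n1 + (m2 : ℝ) / n2 >
      ((m1 : ℝ) + m2 + k + 2) / ((n1 : ℝ) + n2 + k) :=
  cnc_subadditive_par_choice_loop_general n1 n2 m1 m2 k hn1 hn2 hm1 hm2
end

section
/- Let G be a connected undirected graph obtained as the disjoint union of connected graphs G1 and G2 together with a new vertex t and two new edges joining t to a vertex v1 of G1 and a vertex v2 of G2. Then the set of cut-vertices of G equals (cut-vertices of G1) ∪ (cut-vertices of G2) ∪ {v1, v2, t}. -/
/-- A cut-vertex of a graph: removing it disconnects the graph. -/
def IsCutVertex {V : Type*} (G : SimpleGraph V) (v : V) : Prop :=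
  ¬ (G.induce {u | u ≠ v}).Connected

/-- Glue two graphs via a new vertex `t` joined to `v1` in `G1` and to `v2` in `G2`. -/
def glueGraph {V1 V2 : Type*} (G1 : SimpleGraph V1) (G2 : SimpleGraph V2)
    (v1 : V1) (v2 : V2) : SimpleGraph (V1 ⊕ V2 ⊕ Unit) :=
  SimpleGraph.fromRel (fun a b =>
    match a, b with
    | Sum.inl x, Sum.inl y => G1.Adj x y
    | Sum.inr (Sum.inl x), Sum.inr (Sum.inl y) => G2.Adj x y
    | Sum.inl x, Sum.inr (Sum.inr _) => x = v1
    | Sum.inr (Sum.inl x), Sum.inr (Sum.inr _) => x = v2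
    | _, _ => False)


/-! Every edge between `V1` and the rest of the glued graph is the bridge `v1 — t`, so removing
`t`, or removing `v1` when `G1` has another vertex, separates a vertex of `G1` from one outside.
For `x ≠ v1`, the glued graph minus `x` is connected iff `G1` minus `x` is: in one direction every
vertex reaches `t` through `v1` or `v2`; in the other, collapsing `G2` and `t` onto `v1` maps it
onto `G1` minus `x`, sending each edge to an edge or a single vertex. The vertices of `G2` are
handled by the isomorphism exchanging the two parts. -/
section

open SimpleGraph Sum

namespace SimpleGraph

variable {V W : Type*} {G : SimpleGraph V} {H : SimpleGraph W}

theorem Reachable.map_of_adj (f : V → W) (hf : ∀ a b, G.Adj a b → H.Reachable (f a) (f b))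
    {u v : V} (h : G.Reachable u v) : H.Reachable (f u) (f v) := by
  simp only [reachable_iff_reflTransGen] at hf h ⊢
  exact h.lift' f hf

theorem Connected.map_of_adj (f : V → W) (hf_surj : Function.Surjective f)
    (hf : ∀ a b, G.Adj a b → H.Reachable (f a) (f b)) (hG : G.Connected) : H.Connected :=
  have := hG.nonempty.map f
  ⟨fun u v => by
    obtain ⟨u, rfl⟩ := hf_surj u
    obtain ⟨v, rfl⟩ := hf_surj v
    exact (hG u v).map_of_adj f hf⟩

theorem Iso.isCutVertex_iff (e : G ≃g H) (v : V) : IsCutVertex H (e v) ↔ IsCutVertex G v := by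
  have hbij : Set.BijOn e {u | u ≠ v} {w | w ≠ e v} :=
    ⟨fun u hu => e.injective.ne hu, e.injective.injOn,
      fun w hw => ⟨e.symm w, fun h => hw (by simp [← h]), by simp⟩⟩
  exact not_congr (e.induce hbij).connected_iff.symm

end SimpleGraph

theorem isCutVertex_of_separating {V α : Type*} {G : SimpleGraph V} {w : V} (f : V → α)
    (hf : ∀ a b, G.Adj a b → a ≠ w → b ≠ w → f a = f b) {a b : V} (ha : a ≠ w)
    (hb : b ≠ w) (hab : f a ≠ f b) : IsCutVertex G w := fun hG =>
  hab <| reachable_bot.mp <| (hG.preconnected ⟨a, ha⟩ ⟨b, hb⟩).map_of_adj (H := ⊥)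
    (f ∘ Subtype.val) fun u v huv => reachable_bot.mpr (hf u.1 v.1 huv u.2 v.2)

variable {V1 V2 : Type*} {G1 : SimpleGraph V1} {G2 : SimpleGraph V2} {v1 : V1} {v2 : V2}

@[simp]
theorem glueGraph_adj_inl_inl {a b : V1} :
    (glueGraph G1 G2 v1 v2).Adj (inl a) (inl b) ↔ G1.Adj a b := by
  simp only [glueGraph, fromRel_adj, ne_eq, inl.injEq]
  exact ⟨fun h => h.2.elim id .symm, fun h => ⟨h.ne, .inl h⟩⟩

@[simp]
theorem glueGraph_adj_inr_inr {a b : V2} :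
    (glueGraph G1 G2 v1 v2).Adj (inr (inl a)) (inr (inl b)) ↔ G2.Adj a b := by
  simp only [glueGraph, fromRel_adj, ne_eq, inr.injEq, inl.injEq]
  exact ⟨fun h => h.2.elim id .symm, fun h => ⟨h.ne, .inl h⟩⟩

@[simp]
theorem glueGraph_adj_inl_apex {a : V1} :
    (glueGraph G1 G2 v1 v2).Adj (inl a) (inr (inr ())) ↔ a = v1 := by
  simp [glueGraph]

@[simp]
theorem glueGraph_adj_inr_apex {a : V2} :
    (glueGraph G1 G2 v1 v2).Adj (inr (inl a)) (inr (inr ())) ↔ a = v2 := by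
  simp [glueGraph]

def glueGraphSwap (G1 : SimpleGraph V1) (G2 : SimpleGraph V2) (v1 : V1) (v2 : V2) :
    glueGraph G1 G2 v1 v2 ≃g glueGraph G2 G1 v2 v1 where
  toEquiv := ((Equiv.sumAssoc V1 V2 Unit).symm.trans
    ((Equiv.sumComm V1 V2).sumCongr (Equiv.refl Unit))).trans (Equiv.sumAssoc V2 V1 Unit)
  map_rel_iff' := by
    rintro (a | a | a) (b | b | b) <;> simp [glueGraph]

theorem glueGraph_adj_of_isLeft_ne {a b : V1 ⊕ V2 ⊕ Unit} (h : (glueGraph G1 G2 v1 v2).Adj a b)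
    (hab : a.isLeft ≠ b.isLeft) : s(a, b) = s(inl v1, inr (inr ())) := by
  rcases a with a | a | ⟨⟩ <;> rcases b with b | b | ⟨⟩ <;> simp_all [glueGraph]

theorem isCutVertex_glueGraph_of_mem_bridge {w : V1 ⊕ V2 ⊕ Unit}
    (hw : w ∈ s(inl v1, inr (inr ()))) {a b : V1 ⊕ V2 ⊕ Unit} (ha : a ≠ w) (hb : b ≠ w)
    (hab : a.isLeft ≠ b.isLeft) : IsCutVertex (glueGraph G1 G2 v1 v2) w := by
  refine isCutVertex_of_separating isLeft (fun a b h ha hb => ?_) ha hb hab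
  by_contra hne
  rw [← glueGraph_adj_of_isLeft_ne h hne, Sym2.mem_iff] at hw
  exact hw.elim (ha ·.symm) (hb ·.symm)

theorem isCutVertex_glueGraph_apex : IsCutVertex (glueGraph G1 G2 v1 v2) (inr (inr ())) :=
  isCutVertex_glueGraph_of_mem_bridge (Sym2.mem_mk_right _ _) (a := inl v1) (b := inr (inl v2))
    (by simp) (by simp) (by simp)

theorem isCutVertex_glueGraph_inl_self [Nontrivial V1] :
    IsCutVertex (glueGraph G1 G2 v1 v2) (inl v1) := by
  obtain ⟨y, hy⟩ := exists_ne v1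
  exact isCutVertex_glueGraph_of_mem_bridge (Sym2.mem_mk_left _ _) (a := inl y)
    (b := inr (inr ())) (by simpa) (by simp) (by simp)

def glueGraphInl (G1 : SimpleGraph V1) (G2 : SimpleGraph V2) (v1 : V1) (v2 : V2) :
    G1 →g glueGraph G1 G2 v1 v2 :=
  ⟨inl, glueGraph_adj_inl_inl.mpr⟩

def glueGraphRetract {x : V1} (hx : x ≠ v1) :
    ({u | u ≠ inl x} : Set (V1 ⊕ V2 ⊕ Unit)) → ({y | y ≠ x} : Set V1)
  | ⟨inl y, hy⟩ => ⟨y, fun h => hy (congrArg inl h)⟩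
  | _ => ⟨v1, hx.symm⟩

theorem connected_induce_ne_inl_glueGraph_iff (hG2 : G2.Connected) {x : V1} (hx : x ≠ v1) :
    ((glueGraph G1 G2 v1 v2).induce {u | u ≠ inl x}).Connected ↔
      (G1.induce {y | y ≠ x}).Connected := by
  constructor
  · refine Connected.map_of_adj (glueGraphRetract (V2 := V2) hx)
      (fun y => ⟨⟨inl y.1, fun h => y.2 (inl_injective h)⟩, rfl⟩) ?_
    rintro ⟨a | a | ⟨⟩, ha⟩ ⟨b | b | ⟨⟩, hb⟩ h
    · exact Adj.reachable (glueGraph_adj_inl_inl.mp (comap_adj.mp h) :)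
    all_goals simp_all [glueGraphRetract, glueGraph]
  · intro h1
    let H := (glueGraph G1 G2 v1 v2).induce {u | u ≠ inl x}
    let apex : ({u | u ≠ inl x} : Set (V1 ⊕ V2 ⊕ Unit)) := ⟨inr (inr ()), inr_ne_inl⟩
    let left : G1.induce {y | y ≠ x} →g H :=
      induceHom (glueGraphInl G1 G2 v1 v2) fun _ h h' => h (inl_injective h')
    let right : G2 →g H :=
      ⟨fun y => ⟨inr (inl y), inr_ne_inl⟩,
        fun h => comap_adj.mpr (glueGraph_adj_inr_inr.mpr h)⟩
    refine (connected_iff_exists_forall_reachable H).mpr ⟨apex, ?_⟩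
    rintro ⟨y | y | ⟨⟩, hy⟩
    · have : H.Adj (left ⟨v1, hx.symm⟩) apex := comap_adj.mpr (glueGraph_adj_inl_apex.mpr rfl)
      exact this.reachable.symm.trans ((h1 _ ⟨y, fun h => hy (congrArg inl h)⟩).map left)
    · have : H.Adj (right v2) apex := comap_adj.mpr (glueGraph_adj_inr_apex.mpr rfl)
      exact this.reachable.symm.trans ((hG2 v2 y).map right)
    · rfl

theorem isCutVertex_glueGraph_inl_iff [Nontrivial V1] (hG2 : G2.Connected) {x : V1} :
    IsCutVertex (glueGraph G1 G2 v1 v2) (inl x) ↔ IsCutVertex G1 x ∨ x = v1 := by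
  rcases eq_or_ne x v1 with rfl | hx
  · exact iff_of_true isCutVertex_glueGraph_inl_self (.inr rfl)
  · rw [or_iff_left hx]
    exact not_congr (connected_induce_ne_inl_glueGraph_iff hG2 hx)

theorem isCutVertex_glueGraph_inr_inl_iff [Nontrivial V2] (hG1 : G1.Connected) {x : V2} :
    IsCutVertex (glueGraph G1 G2 v1 v2) (inr (inl x)) ↔ IsCutVertex G2 x ∨ x = v2 := by
  rw [← (glueGraphSwap G1 G2 v1 v2).isCutVertex_iff]
  exact isCutVertex_glueGraph_inl_iff hG1

end

theorem cut_vertices_of_glue {V1 V2 : Type*}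
    (G1 : SimpleGraph V1) (G2 : SimpleGraph V2) (v1 : V1) (v2 : V2)
    (hG1 : G1.Connected) (hG2 : G2.Connected)
    (hV1 : Nontrivial V1) (hV2 : Nontrivial V2) :
    ∀ w : V1 ⊕ V2 ⊕ Unit,
      IsCutVertex (glueGraph G1 G2 v1 v2) w ↔
        ((∃ x, w = Sum.inl x ∧ IsCutVertex G1 x) ∨
         (∃ x, w = Sum.inr (Sum.inl x) ∧ IsCutVertex G2 x) ∨
         w = Sum.inl v1 ∨ w = Sum.inr (Sum.inl v2) ∨ w = Sum.inr (Sum.inr ())) := by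
  rintro (x | x | -)
  · simp [isCutVertex_glueGraph_inl_iff hG2]
  · simp [isCutVertex_glueGraph_inr_inl_iff hG1]
  · exact iff_of_true isCutVertex_glueGraph_apex (by simp)
end
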